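/- For λ ∈ ℂ* and α ∈ ℂ, the Neveu-Schwarz module Ω_NS(λ, α) is simple if and only if α ≠ 0. -/
import Mathlib


open Polynomial

/-- `L_m` on the even part `ℂ[x]` of `Ω_NS(λ,α)`: `f ↦ λ^m (x + mα) f(x+m)`. -/
noncomputable def l0 (l a : ℂ) (m : ℤ) (f : Polynomial ℂ) : Polynomial ℂ :=
  l ^ m • ((X + C ((m : ℂ) * a)) * f.comp (X + C (m : ℂ)))

/-- `L_m` on the odd part `ℂ[y]`: `g ↦ λ^m (y + m(α+1/2)) g(y+m)`. -/
noncomputable def nl1 (l a : ℂ) (m : ℤ) (g : Polynomial ℂ) : Polynomial ℂ :=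
  l ^ m • ((X + C ((m : ℂ) * (a + 1/2))) * g.comp (X + C (m : ℂ)))

/-- `G_r` (with `r = k + 1/2`, `k ∈ ℤ`) from the even to the odd part:
`f(x) ↦ λ^{r−1/2} f(y+r)`. -/
noncomputable def ng01 (l : ℂ) (k : ℤ) (f : Polynomial ℂ) : Polynomial ℂ :=
  l ^ k • f.comp (X + C ((k : ℂ) + 1/2))

/-- `G_r` (with `r = k + 1/2`) from the odd to the even part:
`g(y) ↦ λ^{r+1/2} (x + 2rα) g(x+r)`. -/
noncomputable def ng10 (l a : ℂ) (k : ℤ) (g : Polynomial ℂ) : Polynomial ℂ :=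
  l ^ (k + 1) • ((X + C (2 * ((k : ℂ) + 1/2) * a)) * g.comp (X + C ((k : ℂ) + 1/2)))

/-- A graded submodule of `Ω_NS(λ,α)`: subspaces `(W0, W1)` of the even part `ℂ[x]` and
the odd part `ℂ[y]`, invariant under all `L_m` and `G_r`. -/
def NSSub (l a : ℂ) (W0 W1 : Submodule ℂ (Polynomial ℂ)) : Prop :=
  (∀ (m : ℤ), ∀ f ∈ W0, l0 l a m f ∈ W0)
  ∧ (∀ (m : ℤ), ∀ g ∈ W1, nl1 l a m g ∈ W1)
  ∧ (∀ (k : ℤ), ∀ f ∈ W0, ng01 l k f ∈ W1)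
  ∧ (∀ (k : ℤ), ∀ g ∈ W1, ng10 l a k g ∈ W0)

/-- Key derived closure: `(X + (2k'+1)a) f(X + n) ∈ W0` for any odd multiplier and shift. -/
lemma key_closure {l a : ℂ} {W0 W1 : Submodule ℂ (Polynomial ℂ)} (h : NSSub l a W0 W1)
    (hl : l ≠ 0) {f : Polynomial ℂ} (hf : f ∈ W0) (k' k : ℤ) :
    (X + C ((2*(k':ℂ)+1)*a)) * f.comp (X + C ((k:ℂ)+(k':ℂ)+1)) ∈ W0 := by
  have h1 := h.2.2.2 k' _ (h.2.2.1 k f hf)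
  unfold ng01 ng10 at h1
  rw [smul_comp, mul_smul_comm, smul_smul, comp_assoc] at h1
  have e1 : (X + C ((k:ℂ) + 1/2)).comp (X + C ((k':ℂ) + 1/2)) = X + C ((k:ℂ)+(k':ℂ)+1) := by
    rw [add_comp, X_comp, C_comp]
    rw [add_assoc]
    congr 1
    rw [← C_add]
    congr 1
    ring
  have e2 : (2 * ((k':ℂ) + 1/2) * a) = (2*(k':ℂ)+1)*a := by ring
  rw [e1, e2] at h1
  exact (Submodule.smul_mem_iff W0 (mul_ne_zero (zpow_ne_zero _ hl) (zpow_ne_zero _ hl))).mp h1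

/-- Shift invariance of `W0`. -/
lemma shift_mem {l a : ℂ} {W0 W1 : Submodule ℂ (Polynomial ℂ)} (h : NSSub l a W0 W1)
    (hl : l ≠ 0) (ha : a ≠ 0) {f : Polynomial ℂ} (hf : f ∈ W0) (n : ℤ) :
    f.comp (X + C (n:ℂ)) ∈ W0 := by
  have h1 := key_closure h hl hf 0 (n-1)
  have h3 := key_closure h hl hf 1 (n-2)
  have en1 : ((n-1:ℤ):ℂ) + (0:ℤ) + 1 = (n:ℂ) := by push_cast; ring
  have en2 : ((n-2:ℤ):ℂ) + (1:ℤ) + 1 = (n:ℂ) := by push_cast; ring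
  rw [en1] at h1; rw [en2] at h3
  have hsub := W0.sub_mem h3 h1
  have e : (X + C ((2*(1:ℤ)+1)*a)) * f.comp (X + C (n:ℂ))
      - (X + C ((2*(0:ℤ)+1)*a)) * f.comp (X + C (n:ℂ)) = (2*a) • f.comp (X + C (n:ℂ)) := by
    rw [← sub_mul, smul_eq_C_mul, add_sub_add_left_eq_sub, ← C_sub]
    congr 2
    push_cast; ring
  rw [e] at hsub
  exact (Submodule.smul_mem_iff W0 (by simpa using ha)).mp hsub

/-- `X * f ∈ W0`. -/
lemma X_mul_mem {l a : ℂ} {W0 W1 : Submodule ℂ (Polynomial ℂ)} (h : NSSub l a W0 W1)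
    (hl : l ≠ 0) (ha : a ≠ 0) {f : Polynomial ℂ} (hf : f ∈ W0) :
    X * f ∈ W0 := by
  have h1 := key_closure h hl hf 0 (-1)
  have e0 : ((-1:ℤ):ℂ) + (0:ℤ) + 1 = (0:ℂ) := by push_cast; ring
  rw [e0] at h1
  simp only [C_0, add_zero, comp_X] at h1
  have hsub := W0.sub_mem h1 (W0.smul_mem ((2*(0:ℤ)+1)*a) hf)
  have e : (X + C ((2*(0:ℤ)+1)*a)) * f - ((2*(0:ℤ)+1)*a) • f = X * f := by
    rw [smul_eq_C_mul, add_mul, add_sub_cancel_right]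
  rwa [e] at hsub

lemma shift_one_ne (f : Polynomial ℂ) (hd : f.natDegree ≠ 0) :
    f.comp (X + C 1) ≠ f := by
  intro heq
  have heval : ∀ x : ℂ, f.eval (x + 1) = f.eval x := by
    intro x
    have := congrArg (eval x) heq
    simpa [eval_comp] using this
  have hnat : ∀ m : ℕ, f.eval (m : ℂ) = f.eval 0 := by
    intro m
    induction m with
    | zero => simp
    | succ n ih => push_cast; rw [heval]; exact ih
  set g : Polynomial ℂ := f - C (f.eval 0) with hg
  have hroots : {x : ℂ | g.IsRoot x}.Infinite := by
    apply Set.Infinite.mono (s := Set.range ((↑) : ℕ → ℂ))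
    · intro x ⟨m, hm⟩
      simp only [Set.mem_setOf_eq, IsRoot, hg, eval_sub, eval_C, ← hm, hnat m, sub_self]
    · exact Set.infinite_range_of_injective Nat.cast_injective
  have hg0 : g = 0 := eq_zero_of_infinite_isRoot g hroots
  have : f = C (f.eval 0) := by rw [← sub_eq_zero]; exact hg0
  rw [this, natDegree_C] at hd
  exact hd rfl

lemma const_case {W0 : Submodule ℂ (Polynomial ℂ)} {f : Polynomial ℂ}
    (hf : f ∈ W0) (hf0 : f ≠ 0) (hd : f.natDegree = 0) : (1 : Polynomial ℂ) ∈ W0 := by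
  have h1 : f = C (f.coeff 0) := eq_C_of_natDegree_eq_zero hd
  have hc : f.coeff 0 ≠ 0 := fun hc => hf0 (by rw [h1, hc, C_0])
  have h2 := W0.smul_mem (f.coeff 0)⁻¹ hf
  have h3 : (f.coeff 0)⁻¹ • f = 1 := by
    calc (f.coeff 0)⁻¹ • f = (f.coeff 0)⁻¹ • C (f.coeff 0) := by rw [← h1]
    _ = 1 := by rw [smul_C, smul_eq_mul, inv_mul_cancel₀ hc, C_1]
  rwa [h3] at h2

lemma one_mem_aux {l a : ℂ} {W0 W1 : Submodule ℂ (Polynomial ℂ)} (h : NSSub l a W0 W1)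
    (hl : l ≠ 0) (ha : a ≠ 0) :
    ∀ n : ℕ, ∀ f ∈ W0, f ≠ 0 → f.natDegree ≤ n → (1 : Polynomial ℂ) ∈ W0 := by
  intro n
  induction n with
  | zero =>
    intro f hf hf0 hdeg
    exact const_case hf hf0 (Nat.le_zero.mp hdeg)
  | succ n ih =>
    intro f hf hf0 hdeg
    by_cases hd0 : f.natDegree = 0
    · exact const_case hf hf0 hd0
    · set g := f.comp (X + C 1) - f with hgdef
      have hg : g ∈ W0 := by
        have := shift_mem h hl ha hf 1
        push_cast at this
        exact W0.sub_mem this hf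
      have hgne : g ≠ 0 := sub_ne_zero.mpr (shift_one_ne f hd0)
      have hcomp_deg : (f.comp (X + C 1)).natDegree = f.natDegree := by
        rw [natDegree_comp, natDegree_X_add_C, mul_one]
      have hcomp_lead : (f.comp (X + C 1)).leadingCoeff = f.leadingCoeff := by
        rw [leadingCoeff_comp (by rw [natDegree_X_add_C]; exact one_ne_zero),
          (monic_X_add_C (1:ℂ)).leadingCoeff, one_pow, mul_one]
      have hcoeff : g.coeff f.natDegree = 0 := by
        rw [hgdef, coeff_sub, ← hcomp_deg, coeff_natDegree, hcomp_lead, hcomp_deg,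
          coeff_natDegree, sub_self]
      have hle : g.natDegree ≤ f.natDegree := by
        rw [hgdef]
        exact le_trans (natDegree_sub_le _ _) (by rw [hcomp_deg, max_self])
      have hne : g.natDegree ≠ f.natDegree := by
        intro h'
        exact absurd (by rw [leadingCoeff, h']; exact hcoeff)
          (leadingCoeff_ne_zero.mpr hgne)
      exact ih g hg hgne (by omega)

lemma W0_top {l a : ℂ} {W0 W1 : Submodule ℂ (Polynomial ℂ)} (h : NSSub l a W0 W1)
    (hl : l ≠ 0) (ha : a ≠ 0) (hW0 : W0 ≠ ⊥) : W0 = ⊤ := by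
  obtain ⟨f, hf, hf0⟩ := Submodule.exists_mem_ne_zero_of_ne_bot hW0
  have h1 : (1 : Polynomial ℂ) ∈ W0 := one_mem_aux h hl ha f.natDegree f hf hf0 le_rfl
  have hpow : ∀ n : ℕ, (X : Polynomial ℂ) ^ n ∈ W0 := by
    intro n
    induction n with
    | zero => simpa using h1
    | succ n ih =>
      have := X_mul_mem h hl ha ih
      rwa [← pow_succ'] at this
  rw [eq_top_iff]
  intro p _
  have : p = ∑ i ∈ p.support, p.coeff i • X ^ i := by
    conv_lhs => rw [p.as_sum_support]
    refine Finset.sum_congr rfl fun i _ => ?_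
    rw [smul_eq_C_mul, C_mul_X_pow_eq_monomial]
  rw [this]
  exact Submodule.sum_mem W0 fun i _ => W0.smul_mem _ (hpow i)

lemma W1_top {l a : ℂ} {W0 W1 : Submodule ℂ (Polynomial ℂ)} (h : NSSub l a W0 W1)
    (hl : l ≠ 0) (hW0 : W0 = ⊤) : W1 = ⊤ := by
  rw [eq_top_iff]
  intro g _
  have hmem := h.2.2.1 0 (g.comp (X - C (1/2))) (hW0 ▸ Submodule.mem_top)
  unfold ng01 at hmem
  rw [comp_assoc] at hmem
  have e : (X - C (1/2 : ℂ)).comp (X + C (((0:ℤ):ℂ) + 1/2)) = X := by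
    rw [sub_comp, X_comp, C_comp]
    push_cast
    ring
  rw [e, comp_X] at hmem
  simpa using hmem

lemma W0_ne_bot_of_W1 {l a : ℂ} {W0 W1 : Submodule ℂ (Polynomial ℂ)} (h : NSSub l a W0 W1)
    (hl : l ≠ 0) (hW1 : W1 ≠ ⊥) : W0 ≠ ⊥ := by
  obtain ⟨g, hg, hg0⟩ := Submodule.exists_mem_ne_zero_of_ne_bot hW1
  have hmem := h.2.2.2 0 g hg
  intro hbot
  rw [hbot, Submodule.mem_bot] at hmem
  unfold ng10 at hmem
  rw [smul_eq_zero] at hmem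
  rcases hmem with h' | h'
  · exact zpow_ne_zero _ hl h'
  · rw [mul_eq_zero] at h'
    rcases h' with h' | h'
    · exact X_add_C_ne_zero (R := ℂ) _ h'
    · exact hg0 (comp_X_add_C_eq_zero_iff.mp h')

/-- for `λ ∈ ℂ*`, `α ∈ ℂ`, the Neveu-Schwarz module `Ω_NS(λ,α)` is simple
iff `α ≠ 0`. -/
theorem ns_omega_simple_iff (l a : ℂ) (hl : l ≠ 0) :
    (∀ W0 W1 : Submodule ℂ (Polynomial ℂ), NSSub l a W0 W1 →
      (W0 = ⊥ ∧ W1 = ⊥) ∨ (W0 = ⊤ ∧ W1 = ⊤)) ↔ a ≠ 0 := by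
  constructor
  · intro hsimple ha
    subst ha
    set V0 : Submodule ℂ (Polynomial ℂ) := LinearMap.ker (lcoeff ℂ 0) with hV0
    have hmem : ∀ p : Polynomial ℂ, p ∈ V0 ↔ p.coeff 0 = 0 := fun p => by
      simp [hV0, LinearMap.mem_ker, lcoeff_apply]
    have hsub : NSSub l 0 V0 ⊤ := by
      refine ⟨?_, fun _ _ _ => Submodule.mem_top, fun _ _ _ => Submodule.mem_top, ?_⟩
      · intro m f hf
        rw [hmem]
        unfold l0
        simp [coeff_smul, mul_comm]
      · intro k g hg
        rw [hmem]
        unfold ng10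
        simp [coeff_smul, mul_comm]
    rcases hsimple V0 ⊤ hsub with ⟨h0, _⟩ | ⟨h0, _⟩
    · have : (X : Polynomial ℂ) ∈ V0 := (hmem X).mpr (by simp)
      rw [h0, Submodule.mem_bot] at this
      exact X_ne_zero (R := ℂ) this
    · have : (1 : Polynomial ℂ) ∈ V0 := h0 ▸ Submodule.mem_top
      rw [hmem] at this
      simp at this
  · intro ha W0 W1 hsub
    by_cases hW0 : W0 = ⊥
    · by_cases hW1 : W1 = ⊥
      · exact Or.inl ⟨hW0, hW1⟩
      · exact absurd hW0 (W0_ne_bot_of_W1 hsub hl hW1)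
    · have h0 := W0_top hsub hl ha hW0
      exact Or.inr ⟨h0, W1_top hsub hl h0⟩
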